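/- arXiv:1510.06292 — 4 statements merged into one kernel-verified Lean document; each statement's English description precedes it below -/
import Mathlib

section
/- Define ν(r) > 0 for r > 0 as the L²-norm squared of the explicit harmonic 1-form, given by ν(r) = 3π∫₀^r [(∂_sψ₁(s))² sinh²(s) + 2ψ₁(s)²] ds with ψ₁(s) = coth(s) − s·csch²(s). Then ν is a strictly monotone increasing bijection from (0,∞) to (0,∞), with ν(r) ~ 4πr³/3 as r → 0 and ν(r) ~ 6πr as r → ∞. -/
open Real MeasureTheory Filter

/-- `ψ₁(s) = coth(s) − s·csch²(s)`. -/
noncomputable def psi1 (s : ℝ) : ℝ := cosh s / sinh s - s / (sinh s) ^ 2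

/-- `∂_s ψ₁(s) = 2(s·coth(s) − 1)/sinh²(s)`. -/
noncomputable def dpsi1 (s : ℝ) : ℝ := 2 * (s * (cosh s / sinh s) - 1) / (sinh s) ^ 2

/-- `ν(r) = 3π ∫₀^r (∂_sψ₁)² sinh²(s) + 2ψ₁(s)² ds`. -/
noncomputable def nu (r : ℝ) : ℝ :=
  3 * π * ∫ s in Set.Ioc 0 r, (dpsi1 s) ^ 2 * (sinh s) ^ 2 + 2 * (psi1 s) ^ 2

open Set
noncomputable def fI (s : ℝ) : ℝ := (dpsi1 s) ^ 2 * (sinh s) ^ 2 + 2 * (psi1 s) ^ 2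

lemma fI_nonneg (s : ℝ) : 0 ≤ fI s := by unfold fI; positivity

lemma sinh_ne' {s : ℝ} (h : 0 < s) : sinh s ≠ 0 := ne_of_gt (by rwa [Real.sinh_pos_iff])

lemma psi1_pos {s : ℝ} (h : 0 < s) : 0 < psi1 s := by
  have hs := Real.sinh_pos_iff.mpr h
  have h1 : psi1 s = (sinh s * cosh s - s) / (sinh s) ^ 2 := by
    unfold psi1; field_simp
  rw [h1]
  apply div_pos _ (by positivity)
  have h2 : 2 * s < sinh (2 * s) := Real.self_lt_sinh_iff.mpr (by linarith)
  rw [Real.sinh_two_mul] at h2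
  nlinarith
lemma fI_pos {s : ℝ} (h : 0 < s) : 0 < fI s := by
  have := psi1_pos h
  have : 0 < 2 * (psi1 s)^2 := by positivity
  have h2 : 0 ≤ (dpsi1 s)^2 * (sinh s)^2 := by positivity
  unfold fI; linarith


-- sinh t / t → 1 within punctured nhds
lemma tendsto_sinh_div_self : Tendsto (fun t : ℝ => sinh t / t) (nhdsWithin 0 {(0:ℝ)}ᶜ) (nhds 1) := by
  have h := (Real.hasDerivAt_sinh 0)
  rw [hasDerivAt_iff_tendsto_slope] at h
  simp only [Real.cosh_zero] at h
  refine h.congr (fun t => ?_)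
  simp [slope_def_field]

lemma tendsto_sinh_div_self' : Tendsto (fun t : ℝ => sinh t / t) (nhdsWithin 0 (Ioi 0)) (nhds 1) :=
  tendsto_sinh_div_self.mono_left (nhdsWithin_mono 0 (fun x hx => ne_of_gt hx))

lemma tendsto_self_div_sinh : Tendsto (fun t : ℝ => t / sinh t) (nhdsWithin 0 (Ioi 0)) (nhds 1) := by
  have := (tendsto_sinh_div_self'.inv₀ one_ne_zero)
  simp only [inv_one] at this
  refine this.congr' ?_
  filter_upwards [self_mem_nhdsWithin] with t ht
  rw [← one_div, one_div_div]

-- (cosh x - 1)/(3x²) → 1/6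
lemma tendsto_cosh_sub_one : Tendsto (fun x : ℝ => (cosh x - 1) / (3 * x ^ 2)) (nhdsWithin 0 (Ioi 0)) (nhds (1/6)) := by
  have key : ∀ x : ℝ, x ≠ 0 → (cosh x - 1) / (3 * x ^ 2) = (1/6) * (sinh (x/2) / (x/2))^2 := by
    intro x hx
    have h1 : cosh x - 1 = 2 * sinh (x/2) ^ 2 := by
      have := Real.cosh_two_mul (x/2)
      have h2 := Real.cosh_sq (x/2)
      rw [show 2 * (x/2) = x by ring] at this
      nlinarith
    rw [h1, div_pow]
    field_simp
    ring
  have hlim : Tendsto (fun x : ℝ => (1/6 : ℝ) * (sinh (x/2) / (x/2))^2) (nhdsWithin 0 (Ioi 0)) (nhds (1/6)) := by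
    have hcomp : Tendsto (fun x : ℝ => sinh (x/2) / (x/2)) (nhdsWithin 0 (Ioi 0)) (nhds 1) := by
      apply tendsto_sinh_div_self'.comp
      apply tendsto_nhdsWithin_of_tendsto_nhds_of_eventually_within
      · have : Tendsto (fun x : ℝ => x / 2) (nhds 0) (nhds (0/2)) :=
          (tendsto_id (α := ℝ)).div_const (2:ℝ)
        simpa using this.mono_left nhdsWithin_le_nhds
      · filter_upwards [self_mem_nhdsWithin] with x hx
        exact (div_pos (show (0:ℝ) < x from hx) two_pos : (0:ℝ) < x / 2)
    have := (hcomp.pow 2).const_mul (1/6 : ℝ)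
    simpa using this
  refine hlim.congr' ?_
  filter_upwards [self_mem_nhdsWithin] with x hx
  exact (key x (ne_of_gt hx)).symm

-- (sinh x − x)/x³ → 1/6
lemma K1 : Tendsto (fun x : ℝ => (sinh x - x) / x ^ 3) (nhdsWithin 0 (Ioi 0)) (nhds (1/6)) := by
  apply HasDerivAt.lhopital_zero_nhdsGT (f' := fun x => cosh x - 1) (g' := fun x => 3 * x ^ 2)
  · filter_upwards with x
    exact (Real.hasDerivAt_sinh x).sub (hasDerivAt_id' x)
  · filter_upwards with x
    simpa using (hasDerivAt_pow 3 x)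
  · filter_upwards [self_mem_nhdsWithin] with x hx
    have : (0:ℝ) < x := hx
    positivity
  · have : Tendsto (fun x : ℝ => sinh x - x) (nhds 0) (nhds 0) := by
      have := (Real.continuous_sinh.sub continuous_id).tendsto 0
      exact (by simpa using this : Tendsto (sinh - id) (nhds (0:ℝ)) (nhds 0))
    exact this.mono_left nhdsWithin_le_nhds
  · have : Tendsto (fun x : ℝ => x ^ 3) (nhds 0) (nhds 0) := by
      simpa using (continuous_pow 3).tendsto (0:ℝ)
    exact this.mono_left nhdsWithin_le_nhds
  · exact tendsto_cosh_sub_one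

-- (x cosh x − sinh x)/x³ → 1/3
lemma K2 : Tendsto (fun x : ℝ => (x * cosh x - sinh x) / x ^ 3) (nhdsWithin 0 (Ioi 0)) (nhds (1/3)) := by
  apply HasDerivAt.lhopital_zero_nhdsGT (f' := fun x => x * sinh x) (g' := fun x => 3 * x ^ 2)
  · filter_upwards with x
    have h1 : HasDerivAt (fun x : ℝ => x * cosh x) (1 * cosh x + x * sinh x) x :=
      (hasDerivAt_id x).mul (Real.hasDerivAt_cosh x)
    have := h1.sub (Real.hasDerivAt_sinh x)
    exact this.congr_deriv (by ring)
  · filter_upwards with x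
    simpa using (hasDerivAt_pow 3 x)
  · filter_upwards [self_mem_nhdsWithin] with x hx
    have : (0:ℝ) < x := hx
    positivity
  · have : Tendsto (fun x : ℝ => x * cosh x - sinh x) (nhds 0) (nhds 0) := by
      have := ((continuous_id.mul Real.continuous_cosh).sub Real.continuous_sinh).tendsto 0
      exact (by simpa using this : Tendsto (id * cosh - sinh) (nhds (0:ℝ)) (nhds 0))
    exact this.mono_left nhdsWithin_le_nhds
  · have : Tendsto (fun x : ℝ => x ^ 3) (nhds 0) (nhds 0) := by
      simpa using (continuous_pow 3).tendsto (0:ℝ)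
    exact this.mono_left nhdsWithin_le_nhds
  · have key : ∀ x : ℝ, x ≠ 0 → x * sinh x / (3 * x ^ 2) = (1/3) * (sinh x / x) := by
      intro x hx; field_simp
    have hlim := (tendsto_sinh_div_self'.const_mul (1/3 : ℝ))
    rw [mul_one] at hlim
    refine hlim.congr' ?_
    filter_upwards [self_mem_nhdsWithin] with x hx
    exact (key x (ne_of_gt hx)).symm

lemma tendsto_psi1_div : Tendsto (fun s : ℝ => psi1 s / s) (nhdsWithin 0 (Ioi 0)) (nhds (2/3)) := by
  have hK : Tendsto (fun s : ℝ => (sinh (2*s) - 2*s) / (2*s) ^ 3) (nhdsWithin 0 (Ioi 0)) (nhds (1/6)) := by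
    apply K1.comp
    apply tendsto_nhdsWithin_of_tendsto_nhds_of_eventually_within
    · have : Tendsto (fun s : ℝ => 2 * s) (nhds 0) (nhds (2 * 0)) :=
        (tendsto_id (α := ℝ)).const_mul 2
      simpa using this.mono_left nhdsWithin_le_nhds
    · filter_upwards [self_mem_nhdsWithin] with s hs
      have : (0:ℝ) < s := hs
      have : (0:ℝ) < 2 * s := by linarith
      exact this
  have hprod := hK.mul ((tendsto_self_div_sinh.pow 2).const_mul (4:ℝ))
  have : (1/6 : ℝ) * (4 * 1 ^ 2) = 2/3 := by norm_num
  rw [this] at hprod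
  refine hprod.congr' ?_
  filter_upwards [self_mem_nhdsWithin] with s hs
  have hs' : (0:ℝ) < s := hs
  have hsh := Real.sinh_pos_iff.mpr hs'
  unfold psi1
  rw [Real.sinh_two_mul]
  field_simp
  ring

lemma tendsto_dpsi1 : Tendsto dpsi1 (nhdsWithin 0 (Ioi 0)) (nhds (2/3)) := by
  have hprod := (K2.mul (tendsto_self_div_sinh.pow 3)).const_mul (2:ℝ)
  have : (2:ℝ) * (1/3 * 1 ^ 3) = 2/3 := by norm_num
  rw [this] at hprod
  refine hprod.congr' ?_
  filter_upwards [self_mem_nhdsWithin] with s hs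
  have hs' : (0:ℝ) < s := hs
  have hsh := Real.sinh_pos_iff.mpr hs'
  have hne : sinh s ≠ 0 := ne_of_gt hsh
  have hsne : s ≠ 0 := ne_of_gt hs'
  show 2 * ((s * cosh s - sinh s) / s ^ 3 * (s / sinh s) ^ 3) = dpsi1 s
  unfold dpsi1
  rw [div_pow, div_mul_div_comm]
  have h2 : (2:ℝ) * (s * (cosh s / sinh s) - 1) = (2 * (s * cosh s - sinh s)) / sinh s := by
    field_simp
  rw [mul_div_assoc', h2, div_div]
  rw [div_eq_div_iff (by positivity) (by positivity)]
  ring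

lemma tendsto_fI_div_sq : Tendsto (fun s : ℝ => fI s / s ^ 2) (nhdsWithin 0 (Ioi 0)) (nhds (4/3)) := by
  have h1 := (tendsto_dpsi1.pow 2).mul (tendsto_sinh_div_self'.pow 2)
  have h2 := (tendsto_psi1_div.pow 2).const_mul (2:ℝ)
  have hsum := h1.add h2
  have : ((2:ℝ)/3) ^ 2 * 1 ^ 2 + 2 * (2/3) ^ 2 = 4/3 := by norm_num
  rw [this] at hsum
  refine hsum.congr' ?_
  filter_upwards [self_mem_nhdsWithin] with s hs
  have hs' : (0:ℝ) < s := hs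
  have hsne : s ≠ 0 := ne_of_gt hs'
  show (dpsi1 s) ^ 2 * (sinh s / s) ^ 2 + 2 * (psi1 s / s) ^ 2 = fI s / s ^ 2
  unfold fI
  rw [div_pow, div_pow, add_div]
  congr 1
  · rw [mul_div_assoc]
  · rw [mul_div_assoc]

lemma fI_zero : fI 0 = 0 := by
  unfold fI psi1 dpsi1; simp


lemma contOn_fI : ContinuousOn fI (Ici 0) := by
  intro x hx
  rcases eq_or_lt_of_le (mem_Ici.mp hx) with h | h
  · -- x = 0
    subst h
    rw [ContinuousWithinAt]
    rw [fI_zero]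
    have key : Tendsto fI (nhdsWithin 0 (Ioi 0)) (nhds 0) := by
      have hsq : Tendsto (fun s : ℝ => s ^ 2) (nhdsWithin 0 (Ioi 0)) (nhds 0) := by
        have := (continuous_pow 2).tendsto (0:ℝ)
        simpa using this.mono_left nhdsWithin_le_nhds
      have h := tendsto_fI_div_sq.mul hsq
      rw [mul_zero] at h
      refine h.congr' ?_
      filter_upwards [self_mem_nhdsWithin] with s hs
      have : s ≠ 0 := ne_of_gt hs
      field_simp
    have : nhdsWithin (0:ℝ) (Ici 0) = nhdsWithin 0 (insert 0 (Ioi 0)) := by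
      congr 1
      rw [Set.Ioi_insert]
    rw [this, nhdsWithin_insert]
    rw [tendsto_sup]
    exact ⟨by simpa [fI_zero] using tendsto_pure_nhds fI 0, key⟩
  · -- x > 0
    apply ContinuousAt.continuousWithinAt
    have hs : sinh x ≠ 0 := sinh_ne' h
    unfold fI psi1 dpsi1
    fun_prop (disch := intros; positivity)

lemma fI_integrableOn (r : ℝ) : IntegrableOn fI (Ioc 0 r) := by
  rcases le_or_gt r 0 with h | h
  · rw [Set.Ioc_eq_empty (not_lt.mpr h)]
    exact integrableOn_empty
  · exact ((contOn_fI.mono (Set.Icc_subset_Ici_self)).integrableOn_Icc (a := 0) (b := r)).mono_set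
      Set.Ioc_subset_Icc_self

lemma nu_eq (r : ℝ) : nu r = 3 * π * ∫ s in Set.Ioc 0 r, fI s := rfl

lemma integral_fI_pos {a b : ℝ} (ha : 0 ≤ a) (hab : a < b) : 0 < ∫ s in Set.Ioc a b, fI s := by
  have hint : IntegrableOn fI (Ioc a b) := (fI_integrableOn b).mono_set
    (Set.Ioc_subset_Ioc_left ha)
  rw [setIntegral_pos_iff_support_of_nonneg_ae
    (by filter_upwards with x using fI_nonneg x) hint]
  have hsub : Ioc a b ⊆ Function.support fI ∩ Ioc a b := by
    intro x hx
    refine ⟨?_, hx⟩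
    exact (fI_pos (lt_of_le_of_lt ha hx.1)).ne'
  calc (0:ENNReal) < ENNReal.ofReal (b - a) := by
        rw [ENNReal.ofReal_pos]; linarith
    _ = volume (Ioc a b) := (Real.volume_Ioc).symm
    _ ≤ volume (Function.support fI ∩ Ioc a b) := measure_mono hsub

lemma nu_pos {r : ℝ} (hr : 0 < r) : 0 < nu r := by
  rw [nu_eq]
  have := integral_fI_pos le_rfl hr
  positivity

lemma nu_strictMonoOn : StrictMonoOn nu (Ioi 0) := by
  intro a ha b hb hab
  have ha' : (0:ℝ) < a := ha
  rw [nu_eq, nu_eq]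
  have hsplit : (Ioc 0 a) ∪ (Ioc a b) = Ioc 0 b := Set.Ioc_union_Ioc_eq_Ioc ha'.le hab.le
  have hdisj : Disjoint (Ioc 0 a) (Ioc a b) := Set.Ioc_disjoint_Ioc_of_le le_rfl
  have := setIntegral_union hdisj measurableSet_Ioc (fI_integrableOn a)
    ((fI_integrableOn b).mono_set (Set.Ioc_subset_Ioc_left ha'.le))
  rw [hsplit] at this
  rw [this]
  have hpos := integral_fI_pos ha'.le hab
  have hπ : (0:ℝ) < π := Real.pi_pos
  nlinarith

lemma nu_continuousOn {b : ℝ} : ContinuousOn nu (Icc 0 b) := by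
  have h := intervalIntegral.continuousOn_primitive (f := fI) (a := 0) (b := b) (μ := volume)
    ((contOn_fI.mono (Set.Icc_subset_Ici_self)).integrableOn_Icc)
  have : ContinuousOn (fun x => 3 * π * ∫ t in Ioc 0 x, fI t) (Icc 0 b) :=
    (continuousOn_const.mul h)
  exact this

lemma integral_sq_Ioc {r : ℝ} (hr : 0 ≤ r) : ∫ s in Set.Ioc 0 r, s ^ 2 = r ^ 3 / 3 := by
  open intervalIntegral in
  have h : ∫ s in (0:ℝ)..r, s ^ 2 = (r ^ (2+1) - 0 ^ (2+1)) / (2+1) := integral_pow 2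
  rw [intervalIntegral.integral_of_le hr] at h
  norm_num at h
  exact h

lemma sq_integrableOn (r : ℝ) : IntegrableOn (fun s : ℝ => s ^ 2) (Ioc 0 r) := by
  rcases le_or_gt r 0 with h | h
  · rw [Set.Ioc_eq_empty (not_lt.mpr h)]; exact integrableOn_empty
  · exact (((continuous_pow 2).continuousOn).integrableOn_Icc (a:=0) (b:=r)).mono_set
      Set.Ioc_subset_Icc_self

lemma nu_small : Tendsto (fun r => nu r / (4 * π * r ^ 3 / 3)) (nhdsWithin 0 (Ioi 0)) (nhds 1) := by
  rw [Metric.tendsto_nhdsWithin_nhds]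
  intro ε hε
  have hε4 : 0 < ε / 2 := by linarith
  obtain ⟨δ, hδ, hδ'⟩ := Metric.tendsto_nhdsWithin_nhds.mp tendsto_fI_div_sq (ε/2) hε4
  refine ⟨δ, hδ, ?_⟩
  intro r hr hrδ
  have hr' : (0:ℝ) < r := hr
  have hπ := Real.pi_pos
  -- pointwise bound on Ioc 0 r
  have hbd : ∀ s ∈ Ioc (0:ℝ) r, |fI s - (4/3) * s ^ 2| ≤ (ε/2) * s ^ 2 := by
    intro s hs
    have hs0 : 0 < s := hs.1
    have hsδ : dist s 0 < δ := by
      rw [Real.dist_eq, sub_zero, abs_of_pos hs0]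
      calc s ≤ r := hs.2
        _ < δ := by rwa [Real.dist_eq, sub_zero, abs_of_pos hr'] at hrδ
    have := hδ' (Set.mem_Ioi.mpr hs0) hsδ
    rw [Real.dist_eq] at this
    have hsne : s ≠ 0 := ne_of_gt hs0
    have heq : fI s / s ^ 2 - 4/3 = (fI s - (4/3) * s ^ 2) / s ^ 2 := by
      field_simp
    rw [heq, abs_div, abs_of_pos (by positivity : (0:ℝ) < s ^ 2)] at this
    rw [div_lt_iff₀ (by positivity)] at this
    linarith [this]
  -- integral bound
  have hint1 := fI_integrableOn r
  have hint2 : IntegrableOn (fun s : ℝ => (4/3) * s ^ 2) (Ioc 0 r) := (sq_integrableOn r).const_mul _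
  have hintb : IntegrableOn (fun s : ℝ => (ε/2) * s ^ 2) (Ioc 0 r) := (sq_integrableOn r).const_mul _
  have hkey : |(∫ s in Ioc 0 r, fI s) - (4/3) * (r ^ 3 / 3)| ≤ (ε/2) * (r ^ 3 / 3) := by
    have hsub : (∫ s in Ioc 0 r, (fI s - (4/3) * s ^ 2)) =
        (∫ s in Ioc 0 r, fI s) - (4/3) * (r ^ 3 / 3) := by
      rw [integral_sub hint1 hint2, integral_const_mul, integral_sq_Ioc hr'.le]
    have hb : ‖∫ s in Ioc 0 r, (fI s - (4/3) * s ^ 2)‖ ≤ ∫ s in Ioc 0 r, (ε/2) * s ^ 2 := by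
      apply norm_integral_le_of_norm_le hintb
      filter_upwards [ae_restrict_mem measurableSet_Ioc] with s hs
      rw [Real.norm_eq_abs]
      exact hbd s hs
    rw [hsub] at hb
    rw [integral_const_mul, integral_sq_Ioc hr'.le] at hb
    exact hb
  -- conclude
  have hD : (0:ℝ) < 4 * π * r ^ 3 / 3 := by positivity
  rw [Real.dist_eq]
  have heq2 : nu r / (4 * π * r ^ 3 / 3) - 1 = (nu r - 4 * π * r ^ 3 / 3) / (4 * π * r ^ 3 / 3) := by
    field_simp
  rw [heq2, abs_div, abs_of_pos hD, div_lt_iff₀ hD]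
  have hnu : |nu r - 4 * π * r ^ 3 / 3| ≤ 3 * π * ((ε/2) * (r ^ 3 / 3)) := by
    rw [nu_eq]
    have : 3 * π * (∫ s in Ioc 0 r, fI s) - 4 * π * r ^ 3 / 3 =
        3 * π * ((∫ s in Ioc 0 r, fI s) - (4/3) * (r ^ 3 / 3)) := by ring
    rw [this, abs_mul, abs_of_pos (by positivity : (0:ℝ) < 3 * π)]
    exact mul_le_mul_of_nonneg_left hkey (by positivity)
  calc |nu r - 4 * π * r ^ 3 / 3| ≤ 3 * π * ((ε/2) * (r ^ 3 / 3)) := hnu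
    _ < ε * (4 * π * r ^ 3 / 3) := by nlinarith

lemma tendsto_exp_neg_two : Tendsto (fun s : ℝ => exp (-(2*s))) atTop (nhds 0) := by
  apply Real.tendsto_exp_neg_atTop_nhds_zero.comp
  exact (tendsto_id (α := ℝ)).const_mul_atTop two_pos

lemma tendsto_coth : Tendsto (fun s : ℝ => cosh s / sinh s) atTop (nhds 1) := by
  have h1 : Tendsto (fun s : ℝ => (1 + exp (-(2*s))) / (1 - exp (-(2*s)))) atTop (nhds 1) := by
    have hnum := tendsto_const_nhds (x := (1:ℝ)) (f := atTop (α := ℝ)) |>.add tendsto_exp_neg_two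
    have hden := tendsto_const_nhds (x := (1:ℝ)) (f := atTop (α := ℝ)) |>.sub tendsto_exp_neg_two
    have := hnum.div hden (by norm_num)
    rw [add_zero, sub_zero, div_one] at this; exact this
  refine h1.congr' ?_
  filter_upwards [eventually_gt_atTop (0:ℝ)] with s hs
  rw [Real.cosh_eq, Real.sinh_eq]
  have he : (0:ℝ) < exp s := Real.exp_pos s
  have he2 : exp (-(2*s)) = exp (-s) * exp (-s) := by
    rw [← Real.exp_add]; ring_nf
  have hlt : exp (-s) < exp s := Real.exp_lt_exp.mpr (by linarith)
  have hden' : (0:ℝ) < 1 - exp (-(2*s)) := by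
    have : exp (-(2*s)) < exp 0 := Real.exp_lt_exp.mpr (by linarith)
    rw [Real.exp_zero] at this; linarith
  rw [div_eq_div_iff (ne_of_gt hden') (ne_of_gt (by nlinarith [hlt] : (0:ℝ) < (exp s - exp (-s))/2))]
  rw [he2]
  have h4 : exp (-s) * exp s = 1 := by rw [← Real.exp_add]; simp
  field_simp
  nlinarith [h4]

lemma tendsto_sinh_top : Tendsto sinh atTop atTop := by
  have h : Tendsto (fun s : ℝ => (exp s - exp (-s)) / 2) atTop atTop := by
    apply Filter.Tendsto.atTop_div_const two_pos
    exact Real.tendsto_exp_atTop.atTop_add Real.tendsto_exp_neg_atTop_nhds_zero.neg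
  exact h.congr (fun s => (Real.sinh_eq s).symm)

lemma tendsto_inv_sinh : Tendsto (fun s : ℝ => 1 / sinh s) atTop (nhds 0) := by
  exact tendsto_sinh_top.inv_tendsto_atTop.congr (fun s => by simp [one_div])

lemma tendsto_self_div_sinh_top : Tendsto (fun s : ℝ => s / sinh s) atTop (nhds 0) := by
  have hnum : Tendsto (fun s : ℝ => 2 * (s * exp (-s))) atTop (nhds 0) := by
    have := (Real.tendsto_pow_mul_exp_neg_atTop_nhds_zero 1).const_mul (2:ℝ)
    simpa using this
  have hden : Tendsto (fun s : ℝ => 1 - exp (-(2*s))) atTop (nhds 1) := by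
    have := tendsto_const_nhds (x := (1:ℝ)) (f := atTop (α := ℝ)) |>.sub tendsto_exp_neg_two
    simpa using this
  have h := hnum.div hden (by norm_num)
  rw [zero_div] at h
  refine h.congr' ?_
  filter_upwards [eventually_gt_atTop (0:ℝ)] with s hs
  simp only [Pi.div_apply]
  have hsh : 0 < sinh s := Real.sinh_pos_iff.mpr hs
  have hden' : (0:ℝ) < 1 - exp (-(2*s)) := by
    have : exp (-(2*s)) < exp 0 := Real.exp_lt_exp.mpr (by linarith)
    rw [Real.exp_zero] at this; linarith
  rw [div_eq_div_iff (ne_of_gt hden') (ne_of_gt hsh)]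
  rw [Real.sinh_eq]
  have he2 : exp (-(2*s)) = exp (-s) * exp (-s) := by rw [← Real.exp_add]; ring_nf
  rw [he2]
  have h3 := Real.exp_neg s
  have h4 : exp (-s) * exp s = 1 := by rw [← Real.exp_add]; simp
  field_simp
  nlinarith [Real.exp_pos s, Real.exp_pos (-s)]

lemma tendsto_fI_top : Tendsto fI atTop (nhds 2) := by
  have hpsi : Tendsto psi1 atTop (nhds 1) := by
    have h := tendsto_coth.sub (tendsto_self_div_sinh_top.mul tendsto_inv_sinh)
    rw [show (1:ℝ) - 0 * 0 = 1 by ring] at h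
    refine h.congr' ?_
    filter_upwards [eventually_gt_atTop (0:ℝ)] with s hs
    have hsh : sinh s ≠ 0 := sinh_ne' hs
    unfold psi1
    field_simp
  have hd : Tendsto (fun s => dpsi1 s * sinh s) atTop (nhds 0) := by
    have h := ((tendsto_self_div_sinh_top.mul tendsto_coth).const_mul (2:ℝ)).sub
      (tendsto_inv_sinh.const_mul (2:ℝ))
    rw [show (2:ℝ) * (0 * 1) - 2 * 0 = 0 by ring] at h
    refine h.congr' ?_
    filter_upwards [eventually_gt_atTop (0:ℝ)] with s hs
    have hsh : sinh s ≠ 0 := sinh_ne' hs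
    unfold dpsi1
    field_simp
  have h := (hd.pow 2).add ((hpsi.pow 2).const_mul (2:ℝ))
  rw [show (0:ℝ)^2 + 2 * 1^2 = 2 by ring] at h
  refine h.congr (fun s => ?_)
  unfold fI
  ring

lemma nu_large : Tendsto (fun r => nu r / (6 * π * r)) atTop (nhds 1) := by
  rw [Metric.tendsto_atTop]
  intro ε hε
  have hπ := Real.pi_pos
  -- choose R with |fI s - 2| < ε/2 for s ≥ R
  obtain ⟨R₀, hR₀⟩ := (Metric.tendsto_atTop.mp tendsto_fI_top) (ε/2) (by linarith)
  set R := max R₀ 1 with hRdef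
  have hR1 : (1:ℝ) ≤ R := le_max_right _ _
  have hRpos : (0:ℝ) < R := lt_of_lt_of_le one_pos hR1
  have hRb : ∀ s ≥ R, |fI s - 2| ≤ ε/2 := by
    intro s hs
    have := hR₀ s (le_trans (le_max_left _ _) hs)
    rw [Real.dist_eq] at this
    linarith [this]
  set A := ∫ s in Set.Ioc 0 R, fI s with hA
  refine ⟨max (R + 1) ((|A| + 2*R + 2)/ε + 1), ?_⟩
  intro r hr
  have hrR : R + 1 ≤ r := le_trans (le_max_left _ _) hr
  have hr2 : (|A| + 2*R + 2)/ε + 1 ≤ r := le_trans (le_max_right _ _) hr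
  have hrpos : (0:ℝ) < r := by linarith
  have hRr : R < r := by linarith
  -- split the integral
  have hsplit : (∫ s in Set.Ioc 0 r, fI s) = A + ∫ s in Set.Ioc R r, fI s := by
    rw [hA]
    rw [← setIntegral_union (Set.Ioc_disjoint_Ioc_of_le le_rfl) measurableSet_Ioc (fI_integrableOn R)
      ((fI_integrableOn r).mono_set (Set.Ioc_subset_Ioc_left hRpos.le))]
    rw [Set.Ioc_union_Ioc_eq_Ioc hRpos.le hRr.le]
  -- bound the tail integral
  have hintR : IntegrableOn fI (Ioc R r) := (fI_integrableOn r).mono_set (Set.Ioc_subset_Ioc_left hRpos.le)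
  have htail : |(∫ s in Set.Ioc R r, fI s) - 2 * (r - R)| ≤ (ε/2) * (r - R) := by
    have hconst : (∫ s in Set.Ioc R r, (2:ℝ)) = 2 * (r - R) := by
      rw [setIntegral_const, Real.volume_real_Ioc_of_le (by linarith), smul_eq_mul]
      ring
    have hsub2 : (∫ s in Set.Ioc R r, (fI s - 2)) =
        (∫ s in Set.Ioc R r, fI s) - 2 * (r - R) := by
      rw [integral_sub hintR (integrableOn_const (by
        rw [Real.volume_Ioc]; exact ENNReal.ofReal_ne_top)), hconst]
    have hb : ‖∫ s in Set.Ioc R r, (fI s - 2)‖ ≤ ∫ s in Set.Ioc R r, (ε/2 : ℝ) := by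
      apply norm_integral_le_of_norm_le (integrableOn_const (by
        rw [Real.volume_Ioc]; exact ENNReal.ofReal_ne_top))
      filter_upwards [ae_restrict_mem measurableSet_Ioc] with s hs
      rw [Real.norm_eq_abs]
      exact hRb s hs.1.le
    rw [hsub2] at hb
    rw [setIntegral_const, Real.volume_real_Ioc_of_le (by linarith), smul_eq_mul] at hb
    calc |(∫ s in Set.Ioc R r, fI s) - 2 * (r - R)| ≤ (r - R) * (ε/2) := hb
      _ = (ε/2) * (r - R) := by ring
  -- main estimate
  have hnu : nu r = 3 * π * (A + ∫ s in Set.Ioc R r, fI s) := by rw [nu_eq, hsplit]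
  have hest : |nu r - 6 * π * r| ≤ 3 * π * |A| + 6 * π * R + 3 * π * ((ε/2) * (r - R)) := by
    rw [hnu]
    have : 3 * π * (A + ∫ s in Set.Ioc R r, fI s) - 6 * π * r =
        3 * π * A + (-(6 * π * R)) + 3 * π * ((∫ s in Set.Ioc R r, fI s) - 2 * (r - R)) := by
      ring
    rw [this]
    calc |3 * π * A + (-(6 * π * R)) + 3 * π * ((∫ s in Set.Ioc R r, fI s) - 2 * (r - R))|
        ≤ |3 * π * A + (-(6 * π * R))| + |3 * π * ((∫ s in Set.Ioc R r, fI s) - 2 * (r - R))| :=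
          abs_add_le _ _
      _ ≤ (|3 * π * A| + |(-(6 * π * R))|) + |3 * π * ((∫ s in Set.Ioc R r, fI s) - 2 * (r - R))| := by
          gcongr; exact abs_add_le _ _
      _ ≤ 3 * π * |A| + 6 * π * R + 3 * π * ((ε/2) * (r - R)) := by
          rw [abs_mul, abs_of_pos (by positivity : (0:ℝ) < 3 * π), abs_neg,
            abs_of_pos (by positivity : (0:ℝ) < 6 * π * R), abs_mul,
            abs_of_pos (by positivity : (0:ℝ) < 3 * π)]
          gcongr
  rw [Real.dist_eq]
  have hD : (0:ℝ) < 6 * π * r := by positivity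
  have heq : nu r / (6 * π * r) - 1 = (nu r - 6 * π * r) / (6 * π * r) := by field_simp
  rw [heq, abs_div, abs_of_pos hD, div_lt_iff₀ hD]
  have hεr : |A| + 2*R + 2 ≤ ε * r - ε := by
    have := (div_le_iff₀ hε).mp (by linarith : (|A| + 2*R + 2)/ε ≤ r - 1)
    linarith [this]
  calc |nu r - 6 * π * r| ≤ 3 * π * |A| + 6 * π * R + 3 * π * ((ε/2) * (r - R)) := hest
    _ < ε * (6 * π * r) := by
        nlinarith [mul_le_mul_of_nonneg_left hεr hπ.le, mul_pos hπ (mul_pos hε hrpos),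
          mul_nonneg hπ.le (mul_nonneg hε.le hRpos.le), mul_pos hπ hε]

lemma nu_tendsto_zero : Tendsto nu (nhdsWithin 0 (Ioi 0)) (nhds 0) := by
  have hcube : Tendsto (fun r : ℝ => 4 * π * r ^ 3 / 3) (nhdsWithin 0 (Ioi 0)) (nhds 0) := by
    have : Continuous (fun r : ℝ => 4 * π * r ^ 3 / 3) := by continuity
    have h := this.tendsto 0
    simpa using h.mono_left nhdsWithin_le_nhds
  have h := nu_small.mul hcube
  rw [one_mul] at h
  refine h.congr' ?_
  filter_upwards [self_mem_nhdsWithin] with r hr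
  have hr' : (0:ℝ) < r := hr
  have hπ := Real.pi_pos
  field_simp

lemma nu_tendsto_atTop : Tendsto nu atTop atTop := by
  have hlin : Tendsto (fun r : ℝ => 6 * π * r) atTop atTop := by
    apply Filter.Tendsto.const_mul_atTop (by positivity : (0:ℝ) < 6 * π) tendsto_id
  have h := nu_large.pos_mul_atTop one_pos hlin
  refine h.congr' ?_
  filter_upwards [eventually_gt_atTop (0:ℝ)] with r hr
  have hπ := Real.pi_pos
  field_simp

theorem nu_properties_aux :
    (Set.BijOn nu (Set.Ioi 0) (Set.Ioi 0)) ∧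
    (StrictMonoOn nu (Set.Ioi 0)) ∧
    Tendsto (fun r => nu r / (4 * π * r ^ 3 / 3)) (nhdsWithin 0 (Set.Ioi 0)) (nhds 1) ∧
    Tendsto (fun r => nu r / (6 * π * r)) atTop (nhds 1) := by
  refine ⟨⟨fun r hr => nu_pos hr, nu_strictMonoOn.injOn, ?_⟩, nu_strictMonoOn, nu_small, nu_large⟩
  intro y hy
  have hy' : (0:ℝ) < y := hy
  -- find a with nu a < y
  have hev : ∀ᶠ a in nhdsWithin (0:ℝ) (Ioi 0), nu a < y ∧ a ∈ Ioi (0:ℝ) := by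
    filter_upwards [nu_tendsto_zero.eventually (eventually_lt_nhds hy' ), self_mem_nhdsWithin]
      with a h1 h2 using ⟨h1, h2⟩
  obtain ⟨a, hay, ha⟩ := hev.exists
  -- find b with nu b > y
  have hevb : ∀ᶠ b in atTop, y < nu b ∧ a ≤ b := by
    filter_upwards [nu_tendsto_atTop.eventually_gt_atTop y, eventually_ge_atTop a]
      with b h1 h2 using ⟨h1, h2⟩
  obtain ⟨b, hby, hab⟩ := hevb.exists
  have ha' : (0:ℝ) < a := ha
  have hcont : ContinuousOn nu (Icc a b) :=
    nu_continuousOn.mono (Set.Icc_subset_Icc_left ha'.le)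
  have hmem : y ∈ Icc (nu a) (nu b) := ⟨hay.le, hby.le⟩
  obtain ⟨c, hc, hcy⟩ := intermediate_value_Icc hab hcont hmem
  exact ⟨c, lt_of_lt_of_le ha' hc.1, hcy⟩

/-- `ν` is a strictly monotone increasing bijection `(0,∞) → (0,∞)` with
`ν(r) ~ 4πr³/3` as `r → 0⁺` and `ν(r) ~ 6πr` as `r → ∞`. -/
theorem nu_properties :
    (Set.BijOn nu (Set.Ioi 0) (Set.Ioi 0)) ∧
    (StrictMonoOn nu (Set.Ioi 0)) ∧
    Tendsto (fun r => nu r / (4 * π * r ^ 3 / 3)) (nhdsWithin 0 (Set.Ioi 0)) (nhds 1) ∧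
    Tendsto (fun r => nu r / (6 * π * r)) atTop (nhds 1) := nu_properties_aux
end

section
/- Let F: ℝ⁴ → ℝ⁴ be the linear map with matrix (in basis e¹,e²,e³,e⁴) given by Fᵀ = [[3,1,−1,1],[0,0,0,1],[1,0,0,1],[0,−1,0,3]] acting on column vectors. Then F preserves the subspace span(e¹, e³), acting on it by the matrix [[3,−1],[1,0]], and for every n ≥ 0 the intersection span(e¹, e³) ∩ Fⁿ(span(e¹, e⁴)) is one-dimensional, spanned by Fⁿ(e¹). -/
open Matrix Submodule

private abbrev Fmat : Matrix (Fin 4) (Fin 4) ℚ :=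
  !![3, 1, -1, 1; 0, 0, 0, 1; 1, 0, 0, 1; 0, -1, 0, 3]

private lemma Fmat_step (v : Fin 4 → ℚ) :
    (Fmat.mulVec v) 0 = 3 * v 0 + v 1 - v 2 + v 3 ∧
    (Fmat.mulVec v) 1 = v 3 ∧
    (Fmat.mulVec v) 2 = v 0 + v 3 ∧
    (Fmat.mulVec v) 3 = -v 1 + 3 * v 3 := by
  refine ⟨?_, ?_, ?_, ?_⟩ <;>
    (simp [Matrix.mulVec, dotProduct, Fin.sum_univ_four]; try ring)

private lemma Fmat_pow_succ_mulVec (n : ℕ) (v : Fin 4 → ℚ) :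
    (Fmat ^ (n + 1)).mulVec v = Fmat.mulVec ((Fmat ^ n).mulVec v) := by
  rw [pow_succ', Matrix.mulVec_mulVec]

private lemma Fmat_e0_facts (n : ℕ) :
    ((Fmat ^ n).mulVec (Pi.single 0 1)) 1 = 0 ∧
    ((Fmat ^ n).mulVec (Pi.single 0 1)) 3 = 0 ∧
    1 ≤ ((Fmat ^ n).mulVec (Pi.single 0 1)) 0 ∧
    0 ≤ ((Fmat ^ n).mulVec (Pi.single 0 1)) 2 ∧
    ((Fmat ^ n).mulVec (Pi.single 0 1)) 2 ≤ ((Fmat ^ n).mulVec (Pi.single 0 1)) 0 := by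
  induction n with
  | zero => simp [Matrix.one_mulVec]
  | succ n ih =>
      obtain ⟨h1, h3, h0, h2, h20⟩ := ih
      have s := Fmat_step ((Fmat ^ n).mulVec (Pi.single 0 1))
      rw [Fmat_pow_succ_mulVec]
      obtain ⟨s0, s1, s2, s3⟩ := s
      exact ⟨by rw [s1]; linarith, by rw [s3]; linarith, by rw [s0]; linarith,
        by rw [s2]; linarith, by rw [s2, s0]; linarith⟩

private lemma Fmat_e3_facts (n : ℕ) :
    0 ≤ ((Fmat ^ n).mulVec (Pi.single 3 1)) 1 ∧
    ((Fmat ^ n).mulVec (Pi.single 3 1)) 1 ≤ ((Fmat ^ n).mulVec (Pi.single 3 1)) 3 ∧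
    1 ≤ ((Fmat ^ n).mulVec (Pi.single 3 1)) 3 := by
  induction n with
  | zero => simp [Matrix.one_mulVec]
  | succ n ih =>
      obtain ⟨h1, h13, h3⟩ := ih
      have s := Fmat_step ((Fmat ^ n).mulVec (Pi.single 3 1))
      rw [Fmat_pow_succ_mulVec, s.2.1, s.2.2.2]
      exact ⟨by linarith, by linarith, by linarith⟩

private lemma mem_plane (v : Fin 4 → ℚ) :
    v ∈ span ℚ {(Pi.single 0 1 : Fin 4 → ℚ), Pi.single 2 1} ↔ v 1 = 0 ∧ v 3 = 0 := by
  rw [Submodule.mem_span_pair]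
  constructor
  · rintro ⟨a, b, rfl⟩
    constructor <;> simp [Pi.single_apply]
  · rintro ⟨h1, h3⟩
    refine ⟨v 0, v 2, funext fun i => ?_⟩
    fin_cases i <;> simp [Pi.single_apply, h1, h3]

private lemma Fmat_e0_ne_zero (n : ℕ) : (Fmat ^ n).mulVec (Pi.single 0 1) ≠ 0 := by
  intro h
  have h0 := (Fmat_e0_facts n).2.2.1
  rw [h] at h0
  simp at h0
  linarith

private lemma main_inter (n : ℕ) :
    span ℚ {(Pi.single 0 1 : Fin 4 → ℚ), Pi.single 2 1} ⊓
      span ℚ {(Fmat ^ n).mulVec (Pi.single 0 1), (Fmat ^ n).mulVec (Pi.single 3 1)}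
    = span ℚ {(Fmat ^ n).mulVec (Pi.single 0 1)} := by
  obtain ⟨h1, h3, h0, -, -⟩ := Fmat_e0_facts n
  obtain ⟨-, -, w3⟩ := Fmat_e3_facts n
  apply le_antisymm
  · rintro v ⟨hvP, hvS⟩
    have hvP : v 1 = 0 ∧ v 3 = 0 := (mem_plane v).mp hvP
    obtain ⟨a, b, rfl⟩ := Submodule.mem_span_pair.mp hvS
    have hcoord : (a • (Fmat ^ n).mulVec (Pi.single 0 1)
        + b • (Fmat ^ n).mulVec (Pi.single 3 1)) 3
        = a * ((Fmat ^ n).mulVec (Pi.single 0 1)) 3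
          + b * ((Fmat ^ n).mulVec (Pi.single 3 1)) 3 := rfl
    have hb : b = 0 := by
      have := hvP.2
      rw [hcoord, h3] at this
      have hw3 : ((Fmat ^ n).mulVec (Pi.single 3 1)) 3 ≠ 0 := by linarith
      rw [mul_zero, zero_add] at this
      exact (mul_eq_zero.mp this).resolve_right hw3
    rw [hb, zero_smul, add_zero]
    exact Submodule.smul_mem _ _ (Submodule.mem_span_singleton_self _)
  · rw [Submodule.span_le, Set.singleton_subset_iff]
    exact ⟨(mem_plane _).mpr ⟨h1, h3⟩,
      Submodule.subset_span (Set.mem_insert _ _)⟩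

/-- Mayer–Vietoris computation: `F` preserves `span(e¹,e³)`, acting there by
`[[3,−1],[1,0]]` (i.e. `F e¹ = 3e¹ + e³` and `F e³ = −e¹`), and for every `n ≥ 0`
the intersection `span(e¹,e³) ∩ Fⁿ(span(e¹,e⁴))` is one-dimensional, spanned by
`Fⁿ(e¹)`. -/
theorem intersection_spanned_by_Fn_e1 :
    let F : Matrix (Fin 4) (Fin 4) ℚ :=
      !![3, 1, -1, 1; 0, 0, 0, 1; 1, 0, 0, 1; 0, -1, 0, 3]
    let e : Fin 4 → (Fin 4 → ℚ) := fun i => Pi.single i 1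
    (F.mulVec (e 0) = 3 • e 0 + e 2) ∧
    (F.mulVec (e 2) = -(e 0)) ∧
    (span ℚ {e 0, e 2} ⊓ span ℚ {e 0, e 3} = span ℚ {e 0}) ∧
    (∀ n : ℕ,
      span ℚ {e 0, e 2} ⊓ span ℚ {(F ^ n).mulVec (e 0), (F ^ n).mulVec (e 3)}
        = span ℚ {(F ^ n).mulVec (e 0)} ∧
      Module.finrank ℚ (span ℚ {(F ^ n).mulVec (e 0)}) = 1) := by
  intro F e
  refine ⟨?_, ?_, ?_, fun n => ⟨main_inter n, ?_⟩⟩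
  · funext i
    fin_cases i <;>
      simp [F, e, Matrix.mulVec, dotProduct, Fin.sum_univ_four, Pi.single_apply]
  · funext i
    fin_cases i <;>
      simp [F, e, Matrix.mulVec, dotProduct, Fin.sum_univ_four, Pi.single_apply]
  · have h := main_inter 0
    rw [pow_zero, Matrix.one_mulVec, Matrix.one_mulVec] at h
    exact h
  · exact finrank_span_singleton (Fmat_e0_ne_zero n)
end

section
/- For the Margulis constant μ = 0.29, one has √(μ/ν(μ/2)) < 5 and √(ε/ν(ε)) < 5 for all ε ≥ μ/2 = 0.145, where ν(r) = 3π∫₀^r (∂_sψ₁(s))² sinh²(s) + 2ψ₁(s)² ds with ψ₁(s) = coth(s) − s·csch²(s). -/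
/-!
Put `A = s cosh s − sinh s` and `B = sinh s cosh s − s`, so that for `s > 0`
`∂_sψ₁(s) · sinh s = 2A / sinh² s` and `ψ₁(s) = B / sinh² s`. The elementary inequalities
`2A ≥ 2s³/3`, `B ≥ 2s³/3` and `sinh s ≤ s cosh s` bound both quantities below by
`2s / (3 cosh² s)`, which is at least `0.65 s` on `(0, 0.145]`. So the integrand of `ν` is at least
`3 (0.65 s)²` there, and, `ψ₁` being increasing, at least `2 (0.65 · 0.145)²` beyond `0.145`.
Integrating, `ν(ε) ≥ 3π (0.65 · 0.145)² (2ε − 0.145)`, which exceeds `ε / 25` for `ε ≥ 0.145`.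
-/

open Real MeasureTheory

theorem le_of_hasDerivAt_nonneg {f f' : ℝ → ℝ} {a x : ℝ}
    (hf : ∀ y, a ≤ y → HasDerivAt f (f' y) y) (hf' : ∀ y, a < y → 0 ≤ f' y) (hx : a ≤ x) :
    f a ≤ f x := by
  have hmono : MonotoneOn f (Set.Ici a) :=
    monotoneOn_of_hasDerivWithinAt_nonneg (convex_Ici a)
      (fun y hy => (hf y hy).continuousAt.continuousWithinAt)
      (fun y hy => (hf y (interior_subset hy)).hasDerivWithinAt)
      (fun y hy => hf' y (by simpa using hy))
  exact hmono Set.self_mem_Ici hx hx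

section Hyperbolic

variable {x : ℝ}

theorem cube_div_three_le_mul_cosh_sub_sinh (hx : 0 ≤ x) : x ^ 3 / 3 ≤ x * cosh x - sinh x := by
  have h := le_of_hasDerivAt_nonneg (f := fun x => x * cosh x - sinh x - x ^ 3 / 3)
    (f' := fun x => x * (sinh x - x))
    (fun y _ => by
      refine ((((hasDerivAt_id' y).mul (hasDerivAt_cosh y)).sub (hasDerivAt_sinh y)).sub
        ((hasDerivAt_pow 3 y).div_const 3)).congr_deriv ?_
      ring)
    (fun y hy => mul_nonneg hy.le (sub_nonneg.2 (self_le_sinh_iff.2 hy.le))) hx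
  simp only [zero_mul, sinh_zero, sub_zero, ne_eq, OfNat.ofNat_ne_zero, not_false_eq_true,
    zero_pow, zero_div] at h
  linarith

theorem sinh_le_mul_cosh (hx : 0 ≤ x) : sinh x ≤ x * cosh x := by
  linarith [cube_div_three_le_mul_cosh_sub_sinh hx, pow_nonneg hx 3]

theorem two_mul_cube_div_three_le_sinh_mul_cosh_sub (hx : 0 ≤ x) :
    2 * x ^ 3 / 3 ≤ sinh x * cosh x - x := by
  have h := le_of_hasDerivAt_nonneg (f := fun x => sinh x * cosh x - x - 2 * x ^ 3 / 3)
    (f' := fun x => 2 * (sinh x ^ 2 - x ^ 2))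
    (fun y _ => by
      refine ((((hasDerivAt_sinh y).mul (hasDerivAt_cosh y)).sub (hasDerivAt_id' y)).sub
        (((hasDerivAt_pow 3 y).const_mul 2).div_const 3)).congr_deriv ?_
      linear_combination cosh_sq y)
    (fun y hy => by
      have : y ≤ sinh y := self_le_sinh_iff.2 hy.le
      nlinarith) hx
  simp only [sinh_zero, zero_mul, sub_zero, ne_eq, OfNat.ofNat_ne_zero, not_false_eq_true,
    zero_pow, mul_zero, zero_div] at h
  linarith

theorem mul_cosh_sub_sinh_le (hx : 0 ≤ x) : x * cosh x - sinh x ≤ x * sinh x ^ 2 := by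
  have hcosh : cosh x - 1 ≤ sinh x ^ 2 := by nlinarith [one_le_cosh x, cosh_sq x]
  nlinarith [self_le_sinh_iff.2 hx, mul_le_mul_of_nonneg_left hcosh hx]

theorem sinh_mul_cosh_sub_le (hx : 0 ≤ x) : sinh x * cosh x - x ≤ x * sinh x ^ 2 := by
  have hsinh : 0 ≤ sinh x := sinh_nonneg_iff.2 hx
  have h : cosh x * (sinh x * cosh x - x) ≤ cosh x * (x * sinh x ^ 2) := by
    nlinarith [sinh_le_mul_cosh hx, cosh_sq x,
      mul_le_mul_of_nonneg_left (sinh_le_mul_cosh hx) (sq_nonneg (sinh x))]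
  exact le_of_mul_le_mul_left h (cosh_pos x)

theorem mul_le_two_mul_div_three_mul_cosh_sq (hx : 0 < x) (hx' : x ≤ 0.145) :
    0.65 * x ≤ 2 * x / (3 * cosh x ^ 2) := by
  have hexp : cosh x ^ 2 ≤ exp (x ^ 2) :=
    calc cosh x ^ 2 ≤ exp (x ^ 2 / 2) ^ 2 :=
          pow_le_pow_left₀ (cosh_pos x).le (cosh_le_exp_half_sq x) 2
      _ = exp (x ^ 2) := by rw [← exp_nat_mul]; ring_nf
  have hbound : exp (x ^ 2) < 1 / (1 - x ^ 2) :=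
    exp_bound_div_one_sub_of_interval' (by positivity) (by nlinarith)
  have hcosh : cosh x ^ 2 ≤ 40 / 39 := by
    have hx2 : x ^ 2 ≤ 0.021025 := by nlinarith
    rw [lt_div_iff₀ (by linarith)] at hbound
    nlinarith [mul_le_mul_of_nonneg_right hexp (by linarith : (0 : ℝ) ≤ 1 - x ^ 2),
      mul_le_mul_of_nonneg_left hx2 (sq_nonneg (cosh x))]
  rw [le_div_iff₀ (by positivity)]
  nlinarith [mul_le_mul_of_nonneg_left hcosh hx.le]

end Hyperbolic

section Psi

variable {s : ℝ}

theorem psi1_eq_div (hs : s ≠ 0) : psi1 s = (sinh s * cosh s - s) / sinh s ^ 2 := by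
  have : sinh s ≠ 0 := sinh_ne_zero.2 hs
  rw [psi1]
  field_simp

theorem dpsi1_mul_sinh_eq_div (hs : s ≠ 0) :
    dpsi1 s * sinh s = 2 * (s * cosh s - sinh s) / sinh s ^ 2 := by
  have : sinh s ≠ 0 := sinh_ne_zero.2 hs
  rw [dpsi1]
  field_simp

theorem hasDerivAt_psi1 (hs : s ≠ 0) : HasDerivAt psi1 (dpsi1 s) s := by
  have h : sinh s ≠ 0 := sinh_ne_zero.2 hs
  refine (((hasDerivAt_cosh s).div (hasDerivAt_sinh s) h).sub
    ((hasDerivAt_id' s).div ((hasDerivAt_sinh s).pow 2) (pow_ne_zero 2 h))).congr_deriv ?_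
  rw [dpsi1, Pi.pow_apply]
  field_simp
  linear_combination (-sinh s ^ 2) * cosh_sq s

theorem psi1_le_self (hs : 0 < s) : psi1 s ≤ s := by
  rw [psi1_eq_div hs.ne', div_le_iff₀ (by positivity)]
  exact sinh_mul_cosh_sub_le hs.le

theorem dpsi1_mul_sinh_le (hs : 0 < s) : dpsi1 s * sinh s ≤ 2 * s := by
  rw [dpsi1_mul_sinh_eq_div hs.ne', div_le_iff₀ (by positivity)]
  linarith [mul_cosh_sub_sinh_le hs.le]

theorem two_mul_div_three_mul_cosh_sq_le_div {N : ℝ} (hs : 0 < s) (hN : 2 * s ^ 3 / 3 ≤ N) :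
    2 * s / (3 * cosh s ^ 2) ≤ N / sinh s ^ 2 :=
  calc 2 * s / (3 * cosh s ^ 2) = (2 * s ^ 3 / 3) / (s * cosh s) ^ 2 := by field_simp
    _ ≤ N / sinh s ^ 2 :=
        div_le_div₀ (by linarith [pow_pos hs 3]) hN (by positivity)
          (pow_le_pow_left₀ (sinh_pos_iff.2 hs).le (sinh_le_mul_cosh hs.le) 2)

theorem two_mul_div_three_mul_cosh_sq_le_psi1 (hs : 0 < s) :
    2 * s / (3 * cosh s ^ 2) ≤ psi1 s := by
  rw [psi1_eq_div hs.ne']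
  exact two_mul_div_three_mul_cosh_sq_le_div hs (two_mul_cube_div_three_le_sinh_mul_cosh_sub hs.le)

theorem two_mul_div_three_mul_cosh_sq_le_dpsi1_mul_sinh (hs : 0 < s) :
    2 * s / (3 * cosh s ^ 2) ≤ dpsi1 s * sinh s := by
  rw [dpsi1_mul_sinh_eq_div hs.ne']
  exact two_mul_div_three_mul_cosh_sq_le_div hs
    (by linarith [cube_div_three_le_mul_cosh_sub_sinh hs.le])

theorem two_mul_div_three_mul_cosh_sq_nonneg (hs : 0 < s) : 0 ≤ 2 * s / (3 * cosh s ^ 2) :=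
  div_nonneg (by linarith) (by positivity)

theorem psi1_nonneg (hs : 0 < s) : 0 ≤ psi1 s :=
  (two_mul_div_three_mul_cosh_sq_nonneg hs).trans (two_mul_div_three_mul_cosh_sq_le_psi1 hs)

theorem dpsi1_mul_sinh_nonneg (hs : 0 < s) : 0 ≤ dpsi1 s * sinh s :=
  (two_mul_div_three_mul_cosh_sq_nonneg hs).trans
    (two_mul_div_three_mul_cosh_sq_le_dpsi1_mul_sinh hs)

theorem monotoneOn_psi1 : MonotoneOn psi1 (Set.Ioi 0) := by
  refine monotoneOn_of_hasDerivWithinAt_nonneg (convex_Ioi 0)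
    (fun s hs => (hasDerivAt_psi1 (ne_of_gt hs)).continuousAt.continuousWithinAt)
    (fun s hs => (hasDerivAt_psi1 (ne_of_gt (interior_subset hs))).hasDerivWithinAt)
    (fun s hs => ?_)
  rw [interior_Ioi, Set.mem_Ioi] at hs
  exact nonneg_of_mul_nonneg_left (dpsi1_mul_sinh_nonneg hs) (sinh_pos_iff.2 hs)

end Psi

section Integrand

noncomputable def nuIntegrand (s : ℝ) : ℝ := dpsi1 s ^ 2 * sinh s ^ 2 + 2 * psi1 s ^ 2

theorem nu_eq_setIntegral (r : ℝ) : nu r = 3 * π * ∫ s in Set.Ioc 0 r, nuIntegrand s := rfl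

theorem nuIntegrand_eq (s : ℝ) : nuIntegrand s = (dpsi1 s * sinh s) ^ 2 + 2 * psi1 s ^ 2 := by
  rw [nuIntegrand, mul_pow]

theorem nuIntegrand_nonneg (s : ℝ) : 0 ≤ nuIntegrand s := by
  rw [nuIntegrand]
  positivity

theorem measurable_nuIntegrand : Measurable nuIntegrand := by
  unfold nuIntegrand psi1 dpsi1
  fun_prop

variable {s : ℝ}

theorem nuIntegrand_le (hs : 0 < s) : nuIntegrand s ≤ 6 * s ^ 2 := by
  rw [nuIntegrand_eq]
  nlinarith [pow_le_pow_left₀ (dpsi1_mul_sinh_nonneg hs) (dpsi1_mul_sinh_le hs) 2,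
    pow_le_pow_left₀ (psi1_nonneg hs) (psi1_le_self hs) 2]

theorem integrableOn_nuIntegrand (r : ℝ) : IntegrableOn nuIntegrand (Set.Ioc 0 r) := by
  refine Integrable.mono' (integrableOn_const (C := 6 * r ^ 2) measure_Ioc_lt_top.ne)
    measurable_nuIntegrand.aestronglyMeasurable ?_
  filter_upwards [ae_restrict_mem measurableSet_Ioc] with s ⟨hs0, hsr⟩
  rw [norm_of_nonneg (nuIntegrand_nonneg s)]
  exact (nuIntegrand_le hs0).trans (by gcongr)

theorem three_mul_sq_le_nuIntegrand (hs : 0 < s) :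
    3 * (2 * s / (3 * cosh s ^ 2)) ^ 2 ≤ nuIntegrand s := by
  have hg := two_mul_div_three_mul_cosh_sq_nonneg hs
  rw [nuIntegrand_eq]
  linarith [pow_le_pow_left₀ hg (two_mul_div_three_mul_cosh_sq_le_dpsi1_mul_sinh hs) 2,
    pow_le_pow_left₀ hg (two_mul_div_three_mul_cosh_sq_le_psi1 hs) 2]

theorem mul_sq_le_nuIntegrand (hs : 0 < s) (hs' : s ≤ 0.145) :
    3 * 0.65 ^ 2 * s ^ 2 ≤ nuIntegrand s := by
  have h := pow_le_pow_left₀ (by positivity) (mul_le_two_mul_div_three_mul_cosh_sq hs hs') 2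
  linarith [three_mul_sq_le_nuIntegrand hs]

theorem const_le_nuIntegrand (hs : 0.145 ≤ s) : 2 * 0.09425 ^ 2 ≤ nuIntegrand s := by
  have hpsi1 : 0.09425 ≤ psi1 s :=
    calc (0.09425 : ℝ) ≤ 2 * 0.145 / (3 * cosh 0.145 ^ 2) := by
          linarith [mul_le_two_mul_div_three_mul_cosh_sq (x := 0.145) (by norm_num) le_rfl]
      _ ≤ psi1 0.145 := two_mul_div_three_mul_cosh_sq_le_psi1 (by norm_num)
      _ ≤ psi1 s := monotoneOn_psi1 (by norm_num) (Set.mem_Ioi.2 (by linarith)) hs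
  rw [nuIntegrand_eq]
  nlinarith [sq_nonneg (dpsi1 s * sinh s)]

end Integrand

theorem mul_le_setIntegral_nuIntegrand_Ioc_zero :
    0.09425 ^ 2 * 0.145 ≤ ∫ s in Set.Ioc 0 0.145, nuIntegrand s := by
  have hpoly : ∫ s in Set.Ioc (0 : ℝ) 0.145, 3 * 0.65 ^ 2 * s ^ 2 = 0.09425 ^ 2 * 0.145 := by
    rw [← intervalIntegral.integral_of_le (by norm_num), intervalIntegral.integral_const_mul,
      integral_pow]
    norm_num
  rw [← hpoly]
  exact setIntegral_mono_on (Continuous.integrableOn_Ioc (by fun_prop))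
    (integrableOn_nuIntegrand _) measurableSet_Ioc fun s hs => mul_sq_le_nuIntegrand hs.1 hs.2

theorem mul_le_setIntegral_nuIntegrand_Ioc {ε : ℝ} (hε : 0.145 ≤ ε) :
    2 * 0.09425 ^ 2 * (ε - 0.145) ≤ ∫ s in Set.Ioc 0.145 ε, nuIntegrand s := by
  have h := setIntegral_mono_on (integrableOn_const (C := 2 * 0.09425 ^ 2) measure_Ioc_lt_top.ne)
    ((integrableOn_nuIntegrand ε).mono_set (Set.Ioc_subset_Ioc_left (by norm_num)))
    measurableSet_Ioc fun s hs => const_le_nuIntegrand hs.1.le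
  rwa [setIntegral_const, Real.volume_real_Ioc_of_le hε, smul_eq_mul, mul_comm] at h

theorem mul_le_nu {ε : ℝ} (hε : 0.145 ≤ ε) : 3 * π * (0.09425 ^ 2 * (2 * ε - 0.145)) ≤ nu ε := by
  have hsplit : ∫ s in Set.Ioc 0 ε, nuIntegrand s =
      (∫ s in Set.Ioc 0 0.145, nuIntegrand s) + ∫ s in Set.Ioc 0.145 ε, nuIntegrand s := by
    rw [← setIntegral_union (Set.Ioc_disjoint_Ioc_of_le le_rfl) measurableSet_Ioc
      (integrableOn_nuIntegrand _)
      ((integrableOn_nuIntegrand ε).mono_set (Set.Ioc_subset_Ioc_left (by norm_num))),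
      Set.Ioc_union_Ioc_eq_Ioc (by norm_num) hε]
  rw [nu_eq_setIntegral, hsplit]
  gcongr
  linarith [mul_le_setIntegral_nuIntegrand_Ioc_zero, mul_le_setIntegral_nuIntegrand_Ioc hε]

/-- For the Margulis number `μ = 0.29`: `√(μ/ν(μ/2)) < 5`, and `√(ε/ν(ε)) < 5` for
all `ε ≥ μ/2 = 0.145`. -/
theorem numerical_nu_bounds :
    Real.sqrt (0.29 / nu 0.145) < 5 ∧
    ∀ ε : ℝ, 0.145 ≤ ε → Real.sqrt (ε / nu ε) < 5 := by
  have hnu : ∀ ε : ℝ, 0.145 ≤ ε → 0.083 * (2 * ε - 0.145) ≤ nu ε := fun ε hε =>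
    le_trans (by nlinarith [pi_gt_d2]) (mul_le_nu hε)
  have sqrt_div_lt : ∀ a b : ℝ, 0 < b → a < 25 * b → √(a / b) < 5 := fun a b hb hab => by
    rw [sqrt_lt' (by norm_num), div_lt_iff₀ hb]
    linarith
  have hnu₀ := hnu 0.145 le_rfl
  refine ⟨sqrt_div_lt _ _ (by linarith) (by linarith), fun ε hε => ?_⟩
  have hnuε := hnu ε hε
  exact sqrt_div_lt _ _ (by linarith) (by linarith)
end

section
/- For r > 0 set ψ₁(r) = (Γ(3/2)Γ(3)/Γ(5/2))·tanh(r/2)·₂F₁(−1/2, 1; 5/2; tanh²(r/2)). Then ψ₁(r) = coth(r) − r·csch²(r) = (sinh(r)cosh(r) − r)/sinh²(r). -/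
open Real

/-- The Pochhammer symbol `(a)_n` for a real number `a`. -/
noncomputable def pochR (a : ℝ) (n : ℕ) : ℝ := ∏ k ∈ Finset.range n, (a + k)

/-- The Gauss hypergeometric series coefficient of `₂F₁(a,b;c;·)`. -/
noncomputable def hypCoeff (a b c : ℝ) (n : ℕ) : ℝ :=
  pochR a n * pochR b n / (pochR c n * (n.factorial : ℝ))

/-- `₂F₁(a, b; c; z)` as a sum of the Gauss hypergeometric series. -/
noncomputable def twoFone (a b c z : ℝ) : ℝ := ∑' n : ℕ, hypCoeff a b c n * z ^ n

/-!
The coefficients of `₂F₁(-1/2, 1; 5/2; ·)` are `-3 / ((2n-1)(2n+1)(2n+3))`, whose partial fractions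
`-3/8 · 1/(2n-1) + 3/4 · 1/(2n+1) - 3/8 · 1/(2n+3)` turn `₂F₁(-1/2, 1; 5/2; x²)` into three index
shifts of the series `artanh x = ∑ x^(2k+1)/(2k+1)`. At `x = tanh (r/2)` we have `artanh x = r/2`,
and the half-angle formulas `sinh r = 2x/(1-x²)`, `cosh r = (1+x²)/(1-x²)` give the closed form.
-/

lemma pochR_succ (a : ℝ) (n : ℕ) : pochR a (n + 1) = pochR a n * (a + n) :=
  Finset.prod_range_succ _ _

lemma pochR_one (n : ℕ) : pochR 1 n = n.factorial := by
  induction n with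
  | zero => simp [pochR]
  | succ n ih => rw [pochR_succ, ih]; push_cast [Nat.factorial_succ]; ring

lemma pochR_pos {a : ℝ} (ha : 0 < a) (n : ℕ) : 0 < pochR a n :=
  Finset.prod_pos fun k _ ↦ by positivity

lemma pochR_neg_half_mul_eq_pochR_five_halves (n : ℕ) :
    (2 * n - 1) * (2 * n + 1) * (2 * n + 3) * pochR (-(1/2)) n = -3 * pochR (5/2) n := by
  induction n with
  | zero => simp [pochR]
  | succ n ih =>
    rw [pochR_succ, pochR_succ]
    push_cast
    linear_combination (n + 5/2 : ℝ) * ih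

lemma two_mul_natCast_sub_one_ne_zero (n : ℕ) : (2 * n - 1 : ℝ) ≠ 0 :=
  sub_ne_zero.mpr <| by exact_mod_cast (by omega : 2 * n ≠ 1)

lemma hypCoeff_neg_half_one_five_halves (n : ℕ) :
    hypCoeff (-(1/2)) 1 (5/2) n = -3 / ((2 * n - 1) * (2 * n + 1) * (2 * n + 3)) := by
  have h := two_mul_natCast_sub_one_ne_zero n
  have h52 := (pochR_pos (by norm_num : (0:ℝ) < 5/2) n).ne'
  rw [hypCoeff, pochR_one, div_eq_div_iff (by positivity) (by positivity)]
  linear_combination (n.factorial : ℝ) * pochR_neg_half_mul_eq_pochR_five_halves n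

section ArtanhSeries

variable {x L : ℝ}

lemma hasSum_artanh (hx : |x| < 1) :
    HasSum (fun k : ℕ ↦ x ^ (2 * k + 1) / (2 * k + 1)) (artanh x) := by
  have h1 : 0 < 1 + x := by linarith [neg_abs_le x]
  have h2 : 0 < 1 - x := by linarith [le_abs_self x]
  rw [artanh_eq_half_log ⟨by linarith, by linarith⟩, log_div h1.ne' h2.ne', ← smul_eq_mul]
  refine ((hasSum_log_sub_log_of_abs_lt_one hx).const_smul (1 / 2 : ℝ)).congr_fun fun k ↦ ?_
  simp only [smul_eq_mul]
  field_simp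

variable (hL : HasSum (fun k : ℕ ↦ x ^ (2 * k + 1) / (2 * k + 1)) L)
include hL

lemma HasSum.pow_div_two_mul_sub_one :
    HasSum (fun n : ℕ ↦ x ^ (2 * n) / (2 * n - 1)) (x * L - 1) := by
  have hshift : HasSum (fun n : ℕ ↦ x ^ (2 * (n + 1)) / (2 * (n + 1 : ℕ) - 1)) (x * L) :=
    (hL.mul_left x).congr_fun fun k ↦ by push_cast; ring
  have h := (hasSum_nat_add_iff (f := fun n : ℕ ↦ x ^ (2 * n) / (2 * n - 1)) 1).mp hshift
  rw [Finset.sum_range_one] at h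
  norm_num at h
  rwa [← sub_eq_add_neg] at h

lemma HasSum.pow_div_two_mul_add_one (hx : x ≠ 0) :
    HasSum (fun n : ℕ ↦ x ^ (2 * n) / (2 * n + 1)) (L / x) :=
  (hL.div_const x).congr_fun fun k ↦ by rw [pow_succ]; field_simp

lemma HasSum.pow_div_two_mul_add_three (hx : x ≠ 0) :
    HasSum (fun n : ℕ ↦ x ^ (2 * n) / (2 * n + 3)) ((L - x) / x ^ 3) := by
  have hshift := (hasSum_nat_add_iff' 1).mpr hL
  rw [Finset.sum_range_one] at hshift
  norm_num at hshift
  refine (hshift.div_const (x ^ 3)).congr_fun fun k ↦ ?_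
  rw [show 2 * (k + 1) + 1 = 2 * k + 3 by ring, pow_add]
  field_simp
  ring

end ArtanhSeries

lemma hasSum_hypCoeff_neg_half_one_five_halves {x : ℝ} (hx : |x| < 1) (hx0 : x ≠ 0) :
    HasSum (fun n : ℕ ↦ hypCoeff (-(1/2)) 1 (5/2) n * (x ^ 2) ^ n)
      (3 * (x ^ 3 + x - (x ^ 2 - 1) ^ 2 * artanh x) / (8 * x ^ 3)) := by
  have hL := hasSum_artanh hx
  have h := ((hL.pow_div_two_mul_sub_one.mul_left (-3/8)).add
    (hL.pow_div_two_mul_add_one hx0 |>.mul_left (3/4))).add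
    (hL.pow_div_two_mul_add_three hx0 |>.mul_left (-3/8))
  have hsum : -3/8 * (x * artanh x - 1) + 3/4 * (artanh x / x) + -3/8 * ((artanh x - x) / x ^ 3)
      = 3 * (x ^ 3 + x - (x ^ 2 - 1) ^ 2 * artanh x) / (8 * x ^ 3) := by
    field_simp
    ring
  refine hsum ▸ h.congr_fun fun n ↦ ?_
  have := two_mul_natCast_sub_one_ne_zero n
  rw [hypCoeff_neg_half_one_five_halves, ← pow_mul]
  field_simp
  ring

theorem twoFone_neg_half_one_five_halves_sq {x : ℝ} (hx : |x| < 1) (hx0 : x ≠ 0) :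
    twoFone (-(1/2)) 1 (5/2) (x ^ 2) = 3 * (x ^ 3 + x - (x ^ 2 - 1) ^ 2 * artanh x) / (8 * x ^ 3) :=
  (hasSum_hypCoeff_neg_half_one_five_halves hx hx0).tsum_eq

lemma Gamma_three_halves_mul_Gamma_three_div_Gamma_five_halves :
    Gamma (3/2) * Gamma 3 / Gamma (5/2) = 4/3 := by
  have h32 : Gamma (3/2) ≠ 0 := (Gamma_pos_of_pos (by norm_num)).ne'
  rw [show (5/2 : ℝ) = 3/2 + 1 by norm_num, Gamma_add_one (by norm_num), Gamma_ofNat_eq_factorial]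
  field_simp
  norm_num [Nat.factorial]

lemma tanh_pos {x : ℝ} (hx : 0 < x) : 0 < tanh x := by
  rw [tanh_eq_sinh_div_cosh]
  exact div_pos (sinh_pos_iff.mpr hx) (cosh_pos x)

lemma sinh_eq_tanh_half (x : ℝ) : sinh x = 2 * tanh (x / 2) / (1 - tanh (x / 2) ^ 2) := by
  have hc := (cosh_pos (x / 2)).ne'
  conv_lhs => rw [← add_halves x, sinh_add]
  rw [tanh_eq_sinh_div_cosh]
  field_simp
  linear_combination 2 * sinh (x / 2) * cosh_sq_sub_sinh_sq (x / 2)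

lemma cosh_eq_tanh_half (x : ℝ) : cosh x = (1 + tanh (x / 2) ^ 2) / (1 - tanh (x / 2) ^ 2) := by
  have hc := (cosh_pos (x / 2)).ne'
  conv_lhs => rw [← add_halves x, cosh_add]
  rw [tanh_eq_sinh_div_cosh]
  field_simp
  exact cosh_sq_sub_sinh_sq _

/-- For `r > 0`, the hypergeometric expression
`ψ₁(r) = (Γ(3/2)Γ(3)/Γ(5/2))·tanh(r/2)·₂F₁(−1/2, 1; 5/2; tanh²(r/2))` equals
`coth(r) − r·csch²(r) = (sinh r cosh r − r)/sinh² r`. -/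
theorem psi1_closed_form (r : ℝ) (hr : 0 < r) :
    (Real.Gamma (3/2) * Real.Gamma 3 / Real.Gamma (5/2)) * tanh (r/2) *
        twoFone (-(1/2)) 1 (5/2) (tanh (r/2) ^ 2)
      = cosh r / sinh r - r / (sinh r) ^ 2 ∧
    cosh r / sinh r - r / (sinh r) ^ 2 = (sinh r * cosh r - r) / (sinh r) ^ 2 := by
  have hsinh : sinh r ≠ 0 := (sinh_pos_iff.mpr hr).ne'
  refine ⟨?_, by field_simp⟩
  have ht0 : tanh (r / 2) ≠ 0 := (tanh_pos (half_pos hr)).ne'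
  have ht1 : 1 - tanh (r / 2) ^ 2 ≠ 0 := (sub_pos.mpr (tanh_sq_lt_one _)).ne'
  rw [Gamma_three_halves_mul_Gamma_three_div_Gamma_five_halves,
    twoFone_neg_half_one_five_halves_sq (abs_tanh_lt_one _) ht0, artanh_tanh,
    cosh_eq_tanh_half r, sinh_eq_tanh_half r]
  field_simp
  ring
end
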